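/- Let k ≥ 2, ν ≥ k, m, n ∈ kℕ, r_1,…,r_n, c_1,…,c_m ∈ ℕ₀, and v(i,j) ∈ {0, ν} for (i,j) ∈ C(m,n,k). If there exists a real matrix x with entries x_{p,q} ∈ [0,1], (p,q) ∈ [m]×[n], satisfying Σ_{p∈[m]} x_{p,q} = r_q for all q ∈ [n], Σ_{q∈[n]} x_{p,q} = c_p for all p ∈ [m], and Σ_{(p,q)∈W(i,j+l)} x_{p,q} ≤ min{1, v(i,j)} for all (i,j) ∈ C(m,n,k) and l ∈ [k−1]₀, where W(i,j+l) := B_k(i,j) ∩ ([m]×{j+l}), then there exists a matrix with all entries in {0,1} satisfying the same constraints. -/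

import Mathlib

/-!
Call a pair `(q, K)` of a second index `q` and a block `K` of first indices a slot: by the box
constraints it holds at most one `1`, and none when `v = 0`. Match the open slots with `c p`
copies of every `p`, each fitting the slots `(q, block of p)`, and with
`#(open slots of q) - r q` dummies for every `q`, each fitting the open slots of `q`. Spreading
`x p q` evenly over the copies of `p`, and the slack `1 - ∑_{p ∈ K} x p q` evenly over the
dummies of `q`, is a fractional perfect matching, so Hall's condition holds. A perfect matching
uses every copy and every dummy, so the slots matched with copies form a 0/1 solution.
-/

open scoped Classical

/-- The grid `[m] × [n] = {1,…,m} × {1,…,n}`. -/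
def gridIcc (m n : ℕ) : Finset (ℕ × ℕ) := Finset.Icc 1 m ×ˢ Finset.Icc 1 n

/-- The corner points `C(m,n,k) = ([m] × [n]) ∩ (kℕ₀+1)²`. -/
def cornerPts (m n k : ℕ) : Finset (ℕ × ℕ) :=
  (gridIcc m n).filter fun p => p.1 % k = 1 % k ∧ p.2 % k = 1 % k

/-- The block `B_k(i,j) = {(i+a, j+b) : a, b ∈ [k-1]₀}`. -/
def blockF (k i j : ℕ) : Finset (ℕ × ℕ) :=
  Finset.Icc i (i + k - 1) ×ˢ Finset.Icc j (j + k - 1)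

/-- The box `W(i, j+l) = B_k(i,j) ∩ ([m] × {j+l})`. -/
def boxW (m k i j l : ℕ) : Finset (ℕ × ℕ) :=
  (blockF k i j).filter fun z => z.1 ∈ Finset.Icc 1 m ∧ z.2 = j + l

open Finset

section FractionalMatching

variable {ι β : Type*}

theorem sum_filter_coe_sort {M : Type*} [AddCommMonoid M] (s : Finset ι) (p : ι → Prop)
    [DecidablePred p] (F : ι → M) :
    ∑ a : s with p a.1, F a.1 = ∑ a ∈ s with p a, F a := by
  rw [sum_filter, sum_filter]
  exact sum_coe_sort s fun a => if p a then F a else 0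

theorem card_subtype_filter (s : Finset ι) (p : ι → Prop) [DecidablePred p] :
    #{a : s | p a.1} = #{a ∈ s | p a} := by
  simpa only [card_eq_sum_ones] using sum_filter_coe_sort s p fun _ => 1

theorem exists_injective_of_fractional_matching [Fintype ι] [Fintype β] (adj : ι → β → Prop)
    (X : ι → β → ℝ) (hX : ∀ i b, adj i b → 0 ≤ X i b)
    (hleft : ∀ i, ∑ b with adj i b, X i b = 1) (hright : ∀ b, ∑ i with adj i b, X i b ≤ 1) :
    ∃ f : ι → β, Function.Injective f ∧ ∀ i, adj i (f i) := by
  refine (Fintype.all_card_le_filter_rel_iff_exists_injective adj).1 fun A => ?_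
  set N : Finset β := {b | ∃ a ∈ A, adj a b}
  have hA : ∀ i ∈ A, ∑ b ∈ N, (if adj i b then X i b else 0) = 1 := fun i hi => by
    rw [← sum_filter, ← hleft i]
    congr 1
    ext b
    simp only [N, mem_filter, mem_univ, true_and, and_iff_right_iff_imp]
    exact fun h => ⟨i, hi, h⟩
  have : (#A : ℝ) ≤ #N :=
    calc (#A : ℝ) = ∑ i ∈ A, ∑ b ∈ N, if adj i b then X i b else 0 := by
          rw [sum_congr rfl hA, sum_const, nsmul_one]
      _ = ∑ b ∈ N, ∑ i ∈ A, if adj i b then X i b else 0 := sum_comm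
      _ ≤ ∑ b ∈ N, ∑ i, if adj i b then X i b else 0 :=
          sum_le_sum fun b _ => sum_le_sum_of_subset_of_nonneg (subset_univ A)
            fun i _ _ => by split_ifs with h <;> [exact hX i b h; rfl]
      _ ≤ ∑ _b ∈ N, (1 : ℝ) := sum_le_sum fun b _ => by rw [← sum_filter]; exact hright b
      _ = #N := by rw [sum_const, nsmul_one]
  exact_mod_cast this

theorem exists_equiv_of_fractional_matching (L : Finset ι) (R : Finset β) (adj : ι → β → Prop)
    (X : ι → β → ℝ) (hX : ∀ i ∈ L, ∀ b ∈ R, adj i b → 0 ≤ X i b)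
    (hleft : ∀ i ∈ L, ∑ b ∈ R with adj i b, X i b = 1)
    (hright : ∀ b ∈ R, ∑ i ∈ L with adj i b, X i b ≤ 1) (hcard : #L = #R) :
    ∃ e : L ≃ R, ∀ i : L, adj i (e i) := by
  obtain ⟨f, hf, hadj⟩ := exists_injective_of_fractional_matching (fun (i : L) (b : R) => adj i b)
    (fun i b => X i b) (fun i b => hX i i.2 b b.2)
    (fun i => (sum_filter_coe_sort R (adj i) (X i)).trans (hleft i i.2))
    (fun b => (sum_filter_coe_sort L (fun i => adj i b) (fun i => X i b)).trans_le
      (hright b b.2))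
  have hbij : Function.Bijective f :=
    (Fintype.bijective_iff_injective_and_card f).2 ⟨hf, by simpa using hcard⟩
  exact ⟨Equiv.ofBijective f hbij, hadj⟩

end FractionalMatching

namespace BlockCapacity

variable {α γ κ : Type*}

/-- The right-hand vertices of the matching: `⟨Sum.inl p, j⟩` is the `j`-th copy of `p` and
`⟨Sum.inr q, j⟩` the `j`-th dummy of `q`. -/
def units (P : Finset α) (Q : Finset γ) (c : α → ℕ) (d : γ → ℕ) : Finset (Σ _ : α ⊕ γ, ℕ) :=
  (P.disjSum Q).sigma fun z => range (Sum.elim c d z)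

def Fills (g : α → κ) (s : γ × κ) (b : Σ _ : α ⊕ γ, ℕ) : Prop :=
  Sum.elim (fun p => g p = s.2) (fun q => q = s.1) b.1

theorem card_units (P : Finset α) (Q : Finset γ) (c : α → ℕ) (d : γ → ℕ) :
    #(units P Q c d) = ∑ p ∈ P, c p + ∑ q ∈ Q, d q := by
  simp only [units, card_sigma, card_range, sum_disjSum, Sum.elim_inl, Sum.elim_inr]

theorem Fills.eq_of_inl {g : α → κ} {s : γ × κ} {b : Σ _ : α ⊕ γ, ℕ} (h : Fills g s b) {p : α}
    (hb : b.1 = Sum.inl p) : g p = s.2 := by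
  rwa [Fills, hb] at h

theorem Fills.eq_of_inr {g : α → κ} {s : γ × κ} {b : Σ _ : α ⊕ γ, ℕ} (h : Fills g s b) {q : γ}
    (hb : b.1 = Sum.inr q) : q = s.1 := by
  rwa [Fills, hb] at h

variable [DecidableEq κ] (P : Finset α) (Q : Finset γ) (g : α → κ) (u : γ → κ → ℕ)

def slots : Finset (γ × κ) := {s ∈ Q ×ˢ P.image g | u s.1 s.2 = 1}

def blockSum (x : α → γ → ℝ) (s : γ × κ) : ℝ := ∑ p ∈ P with g p = s.2, x p s.1

def slack (r : γ → ℕ) (q : γ) : ℕ := #{K ∈ P.image g | u q K = 1} - r q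

noncomputable def weight (x : α → γ → ℝ) (c : α → ℕ) (d : γ → ℕ) (s : γ × κ)
    (b : Σ _ : α ⊕ γ, ℕ) : ℝ :=
  Sum.elim (fun p => x p s.1 / c p) (fun q => (1 - blockSum P g x s) / d q) b.1

structure IsFractional (r : γ → ℕ) (c : α → ℕ) (x : α → γ → ℝ) : Prop where
  nonneg : ∀ p ∈ P, ∀ q ∈ Q, 0 ≤ x p q
  sum_eq_r : ∀ q ∈ Q, ∑ p ∈ P, x p q = r q
  sum_eq_c : ∀ p ∈ P, ∑ q ∈ Q, x p q = c p
  blockSum_le : ∀ q ∈ Q, ∀ p ∈ P, blockSum P g x (q, g p) ≤ u q (g p)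

variable {P Q g u}

theorem mem_slots {s : γ × κ} :
    s ∈ slots P Q g u ↔ s.1 ∈ Q ∧ s.2 ∈ P.image g ∧ u s.1 s.2 = 1 := by
  simp only [slots, mem_filter, mem_product, and_assoc]

theorem slots_filter_fst {q : γ} (hq : q ∈ Q) :
    {s ∈ slots P Q g u | s.1 = q} = {K ∈ P.image g | u q K = 1}.image (Prod.mk q) := by
  ext ⟨q', K⟩
  simp only [mem_filter, mem_slots, mem_image, Prod.mk.injEq]
  constructor
  · rintro ⟨⟨-, hK, hu⟩, rfl⟩
    exact ⟨K, ⟨hK, hu⟩, rfl, rfl⟩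
  · rintro ⟨K, ⟨hK, hu⟩, rfl, rfl⟩
    exact ⟨⟨hq, hK, hu⟩, rfl⟩

theorem card_slots : #(slots P Q g u) = ∑ q ∈ Q, #{K ∈ P.image g | u q K = 1} := by
  rw [card_eq_sum_card_fiberwise (f := Prod.fst) fun s hs => (mem_slots.1 hs).1]
  refine sum_congr rfl fun q hq => ?_
  rw [slots_filter_fst hq, card_image_of_injective _ (Prod.mk_right_injective q)]

theorem filter_units_fills (c : α → ℕ) (d : γ → ℕ) {s : γ × κ} (hs : s.1 ∈ Q) :
    {b ∈ units P Q c d | Fills g s b} = units {p ∈ P | g p = s.2} {s.1} c d := by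
  ext ⟨p | q, j⟩ <;> rw [mem_filter]
  · simp [units, Fills, and_right_comm]
  · simp only [units, Fills, mem_sigma, inr_mem_disjSum, mem_singleton, Sum.elim_inr]
    constructor
    · rintro ⟨⟨-, hj⟩, rfl⟩; exact ⟨rfl, hj⟩
    · rintro ⟨rfl, hj⟩; exact ⟨⟨hs, hj⟩, rfl⟩

section Fractional

variable {r : γ → ℕ} {c : α → ℕ} {x : α → γ → ℝ}

theorem IsFractional.sum_c_eq_sum_r (hx : IsFractional P Q g u r c x) :
    ∑ p ∈ P, c p = ∑ q ∈ Q, r q := by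
  have : ∑ p ∈ P, (c p : ℝ) = ∑ q ∈ Q, (r q : ℝ) := by
    rw [← sum_congr rfl hx.sum_eq_c, ← sum_congr rfl hx.sum_eq_r, sum_comm]
  exact_mod_cast this

theorem IsFractional.blockSum_nonneg (hx : IsFractional P Q g u r c x) {q : γ} (hq : q ∈ Q)
    (K : κ) : 0 ≤ blockSum P g x (q, K) :=
  sum_nonneg fun p hp => hx.nonneg p (mem_filter.1 hp).1 q hq

theorem IsFractional.blockSum_le_one (hx : IsFractional P Q g u r c x) {s : γ × κ}
    (hs : s ∈ slots P Q g u) : blockSum P g x s ≤ 1 := by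
  obtain ⟨hq, hK, hK1⟩ := mem_slots.1 hs
  obtain ⟨p, hp, hpK⟩ := mem_image.1 hK
  have := hx.blockSum_le s.1 hq p hp
  rwa [hpK, hK1, Nat.cast_one] at this

theorem IsFractional.sum_blockSum_slots (hu : ∀ q K, u q K ≤ 1)
    (hx : IsFractional P Q g u r c x) {q : γ} (hq : q ∈ Q) :
    ∑ K ∈ P.image g with u q K = 1, blockSum P g x (q, K) = r q := by
  have hslot : ∀ K ∈ P.image g, blockSum P g x (q, K) ≠ 0 → u q K = 1 := by
    intro K hK hne
    obtain ⟨p, hp, rfl⟩ := mem_image.1 hK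
    by_contra h1
    have hu0 : u q (g p) = 0 := by have := hu q (g p); omega
    have := hx.blockSum_le q hq p hp
    rw [hu0, Nat.cast_zero] at this
    exact hne (le_antisymm this (hx.blockSum_nonneg hq _))
  rw [sum_filter_of_ne hslot, ← hx.sum_eq_r q hq]
  exact sum_fiberwise_of_maps_to (fun p hp => mem_image_of_mem g hp) fun p => x p q

theorem IsFractional.le_card_slots (hu : ∀ q K, u q K ≤ 1) (hx : IsFractional P Q g u r c x)
    {q : γ} (hq : q ∈ Q) : r q ≤ #{K ∈ P.image g | u q K = 1} := by
  have : (r q : ℝ) ≤ #{K ∈ P.image g | u q K = 1} := by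
    rw [← hx.sum_blockSum_slots hu hq, card_eq_sum_ones, Nat.cast_sum, Nat.cast_one]
    exact sum_le_sum fun K hK => hx.blockSum_le_one (mem_slots.2 ⟨hq, mem_filter.1 hK⟩)
  exact_mod_cast this

theorem IsFractional.sum_one_sub_blockSum (hu : ∀ q K, u q K ≤ 1)
    (hx : IsFractional P Q g u r c x) {q : γ} (hq : q ∈ Q) :
    ∑ K ∈ P.image g with u q K = 1, (1 - blockSum P g x (q, K)) = slack P g u r q := by
  rw [sum_sub_distrib, hx.sum_blockSum_slots hu hq, sum_const, nsmul_one, slack,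
    Nat.cast_sub (hx.le_card_slots hu hq)]

theorem IsFractional.weight_nonneg (hx : IsFractional P Q g u r c x) {d : γ → ℕ}
    {s : γ × κ} (hs : s ∈ slots P Q g u) {b : Σ _ : α ⊕ γ, ℕ} (hb : b ∈ units P Q c d) :
    0 ≤ weight P g x c d s b := by
  obtain ⟨p | q, j⟩ := b <;> simp only [weight, Sum.elim_inl, Sum.elim_inr]
  · have hp : p ∈ P := by simp only [units, mem_sigma, inl_mem_disjSum] at hb; exact hb.1
    exact div_nonneg (hx.nonneg p hp s.1 (mem_slots.1 hs).1) (Nat.cast_nonneg _)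
  · exact div_nonneg (sub_nonneg.2 (hx.blockSum_le_one hs)) (Nat.cast_nonneg _)

theorem sum_weight_fills {d : γ → ℕ} {s : γ × κ} (hs : s.1 ∈ Q)
    (hc0 : ∀ p ∈ P, c p = 0 → x p s.1 = 0) (hd0 : d s.1 = 0 → blockSum P g x s = 1) :
    ∑ b ∈ units P Q c d with Fills g s b, weight P g x c d s b = 1 := by
  rw [filter_units_fills c d hs, units, sum_sigma, sum_disjSum, sum_singleton]
  simp only [weight, Sum.elim_inl, Sum.elim_inr, sum_const, card_range, nsmul_eq_mul]
  rw [sum_congr rfl fun p hp =>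
      mul_div_cancel_of_imp' (hc0 p (mem_filter.1 hp).1 ∘ Nat.cast_eq_zero.1),
    mul_div_cancel_of_imp' fun h => sub_eq_zero.2 (hd0 (Nat.cast_eq_zero.1 h)).symm,
    blockSum, add_sub_cancel]

theorem IsFractional.sum_weight_le_one (hu : ∀ q K, u q K ≤ 1)
    (hx : IsFractional P Q g u r c x) {b : Σ _ : α ⊕ γ, ℕ}
    (hb : b ∈ units P Q c (slack P g u r)) :
    ∑ s ∈ slots P Q g u with Fills g s b, weight P g x c (slack P g u r) s b ≤ 1 := by
  obtain ⟨p | q, j⟩ := b <;>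
    simp only [units, mem_sigma, inl_mem_disjSum, inr_mem_disjSum, mem_range, Sum.elim_inl,
      Sum.elim_inr] at hb
  case inl =>
    rw [filter_congr (p := fun s => Fills g s ⟨.inl p, j⟩) (q := fun s : γ × κ => s.2 = g p)
      fun s _ => eq_comm]
    simp only [weight, Sum.elim_inl]
    calc ∑ s ∈ slots P Q g u with s.2 = g p, x p s.1 / c p
        ≤ ∑ s ∈ Q ×ˢ {g p}, x p s.1 / c p := by
          refine sum_le_sum_of_subset_of_nonneg (fun s hs => ?_) fun s hs _ => ?_
          · obtain ⟨hs, hsp⟩ := mem_filter.1 hs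
            exact mem_product.2 ⟨(mem_slots.1 hs).1, mem_singleton.2 hsp⟩
          · exact div_nonneg (hx.nonneg p hb.1 s.1 (mem_product.1 hs).1) (Nat.cast_nonneg _)
      _ = 1 := by
          rw [sum_product]
          simp only [sum_singleton]
          rw [← sum_div, hx.sum_eq_c p hb.1]
          exact div_self (Nat.cast_ne_zero.2 (by omega))
  case inr =>
    rw [filter_congr (p := fun s => Fills g s ⟨.inr q, j⟩) (q := fun s : γ × κ => s.1 = q)
      fun s _ => eq_comm]
    simp only [weight, Sum.elim_inr]
    rw [← sum_div, slots_filter_fst hb.1,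
      sum_image fun _ _ _ _ h => Prod.mk_right_injective q h,
      hx.sum_one_sub_blockSum hu hb.1]
    exact div_self_le_one _

theorem IsFractional.exists_equiv_fills (hu : ∀ q K, u q K ≤ 1)
    (hx : IsFractional P Q g u r c x) :
    ∃ e : slots P Q g u ≃ units P Q c (slack P g u r), ∀ s : slots P Q g u, Fills g s (e s).1 := by
  have hc0 : ∀ p ∈ P, c p = 0 → ∀ q ∈ Q, x p q = 0 := fun p hp h0 =>
    (sum_eq_zero_iff_of_nonneg (hx.nonneg p hp)).1 (by rw [hx.sum_eq_c p hp, h0, Nat.cast_zero])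
  have hd0 : ∀ s ∈ slots P Q g u, slack P g u r s.1 = 0 → blockSum P g x s = 1 := by
    rintro ⟨q, K⟩ hs h0
    obtain ⟨hq, hK, hK1⟩ := mem_slots.1 hs
    have hsum := hx.sum_one_sub_blockSum hu hq
    rw [h0, Nat.cast_zero, sum_eq_zero_iff_of_nonneg fun K' hK' => sub_nonneg.2
      (hx.blockSum_le_one (mem_slots (s := (q, K')).2 ⟨hq, mem_filter.1 hK'⟩))] at hsum
    exact (sub_eq_zero.1 (hsum K (mem_filter.2 ⟨hK, hK1⟩))).symm
  refine exists_equiv_of_fractional_matching _ _ (Fills g) (weight P g x c (slack P g u r))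
    (fun s hs b hb _ => hx.weight_nonneg hs hb)
    (fun s hs => sum_weight_fills (mem_slots.1 hs).1
      (fun p hp h0 => hc0 p hp h0 s.1 (mem_slots.1 hs).1) (hd0 s hs))
    (fun b hb => hx.sum_weight_le_one hu hb) ?_
  rw [card_slots, card_units, hx.sum_c_eq_sum_r, ← sum_add_distrib]
  refine sum_congr rfl fun q hq => ?_
  have := hx.le_card_slots hu hq
  rw [slack]
  omega

end Fractional

section Rounding

variable {r : γ → ℕ} {c : α → ℕ}

/-- Whether the slot `(q, g p)` is matched with a copy of `p`. -/
noncomputable def matchCount (e : slots P Q g u ≃ units P Q c (slack P g u r)) (p : α)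
    (q : γ) : ℕ :=
  #{s : slots P Q g u | s.1.1 = q ∧ (e s).1.1 = Sum.inl p}

theorem card_matched_to (e : slots P Q g u ≃ units P Q c (slack P g u r)) {z : α ⊕ γ}
    (hz : z ∈ P.disjSum Q) : #{s | (e s).1.1 = z} = Sum.elim c (slack P g u r) z := by
  rw [card_equiv e (t := {b | b.1.1 = z}) fun s => by simp,
    card_subtype_filter _ fun b : Σ _ : α ⊕ γ, ℕ => b.1 = z]
  have : {b ∈ units P Q c (slack P g u r) | b.1 = z} =
      ({z} : Finset _).sigma fun z => range (Sum.elim c (slack P g u r) z) := by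
    ext ⟨z', j⟩
    simp only [units, mem_filter, mem_sigma, mem_singleton]
    constructor
    · rintro ⟨⟨-, hj⟩, rfl⟩; exact ⟨rfl, hj⟩
    · rintro ⟨rfl, hj⟩; exact ⟨⟨hz, hj⟩, rfl⟩
  rw [this, card_sigma, sum_singleton, card_range]

theorem card_slots_filter_le (σ : γ × κ) : #{s : slots P Q g u | s.1 = σ} ≤ u σ.1 σ.2 := by
  by_cases hσ : σ ∈ slots P Q g u
  · rw [(mem_slots.1 hσ).2.2]
    exact card_le_one.2 fun a ha b hb =>
      Subtype.ext ((mem_filter.1 ha).2.trans (mem_filter.1 hb).2.symm)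
  · rw [filter_eq_empty_iff.2 fun s _ (h : s.1 = σ) => hσ (h ▸ s.2), card_empty]
    exact Nat.zero_le _

variable {e : slots P Q g u ≃ units P Q c (slack P g u r)}

theorem matchCount_le (he : ∀ s : slots P Q g u, Fills g s (e s).1) (p : α) (q : γ) :
    matchCount e p q ≤ u q (g p) := by
  refine (card_le_card fun s hs => ?_).trans (card_slots_filter_le (q, g p))
  obtain ⟨hq, hp⟩ := (mem_filter.1 hs).2
  exact mem_filter.2 ⟨mem_univ _, Prod.ext hq ((he s).eq_of_inl hp).symm⟩

theorem sum_matchCount_block_le (he : ∀ s : slots P Q g u, Fills g s (e s).1) (q : γ) (K : κ) :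
    ∑ p ∈ P with g p = K, matchCount e p q ≤ u q K := by
  set T : Finset (slots P Q g u) := {s | s.1 = (q, K)}
  let inl : α ↪ α ⊕ γ := Function.Embedding.inl
  calc ∑ p ∈ P with g p = K, matchCount e p q
      = ∑ p ∈ P with g p = K, #{s ∈ T | (e s).1.1 = Sum.inl p} := by
        refine sum_congr rfl fun p hp => ?_
        rw [matchCount, filter_filter]
        refine congrArg card (filter_congr fun s _ => ⟨fun ⟨hq, hs⟩ => ?_, fun ⟨hs, ho⟩ =>
          ⟨congrArg Prod.fst hs, ho⟩⟩)
        exact ⟨Prod.ext hq (((he s).eq_of_inl hs).symm.trans (mem_filter.1 hp).2), hs⟩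
    _ = ∑ z ∈ {p ∈ P | g p = K}.map inl, #{s ∈ T | (e s).1.1 = z} :=
        (sum_map {p ∈ P | g p = K} inl fun z => #{s ∈ T | (e s).1.1 = z}).symm
    _ = #{s ∈ T | (e s).1.1 ∈ {p ∈ P | g p = K}.map inl} :=
        sum_card_fiberwise_eq_card_filter _ _ _
    _ ≤ #T := card_filter_le _ _
    _ ≤ u q K := card_slots_filter_le (q, K)

theorem sum_matchCount_right {p : α} (hp : p ∈ P) : ∑ q ∈ Q, matchCount e p q = c p := by
  rw [← Sum.elim_inl c (slack P g u r) p, ← card_matched_to e (inl_mem_disjSum.2 hp),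
    card_eq_sum_card_fiberwise fun s _ => (mem_slots.1 s.2).1]
  refine sum_congr rfl fun q _ => ?_
  rw [matchCount, filter_filter]
  exact congrArg card (filter_congr fun s _ => and_comm)

theorem sum_matchCount_left (he : ∀ s : slots P Q g u, Fills g s (e s).1) {q : γ} (hq : q ∈ Q)
    (hr : r q ≤ #{K ∈ P.image g | u q K = 1}) : ∑ p ∈ P, matchCount e p q = r q := by
  set S : Finset (slots P Q g u) := {s | s.1.1 = q}
  have hfiber := card_eq_sum_card_fiberwise (s := S) (f := fun s => (e s).1.1)
    (t := P.disjSum Q) fun s _ => (mem_sigma.1 (e s).2).1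
  have hS : #S = #{K ∈ P.image g | u q K = 1} := by
    rw [card_subtype_filter _ fun s : γ × κ => s.1 = q, slots_filter_fst hq,
      card_image_of_injective _ (Prod.mk_right_injective q)]
  have hcopies : ∀ p ∈ P, #{s ∈ S | (e s).1.1 = Sum.inl p} = matchCount e p q :=
    fun p _ => by rw [matchCount, filter_filter]
  have hdummies : ∀ q' ∈ Q, #{s ∈ S | (e s).1.1 = Sum.inr q'} =
      if q' = q then slack P g u r q else 0 := by
    intro q' hq'
    rw [filter_filter]
    split_ifs with h
    · subst h
      rw [← Sum.elim_inr c (slack P g u r) q', ← card_matched_to e (inr_mem_disjSum.2 hq')]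
      exact congrArg card (filter_congr fun s _ =>
        ⟨And.right, fun ho => ⟨((he s).eq_of_inr ho).symm, ho⟩⟩)
    · exact card_eq_zero.2 (filter_eq_empty_iff.2 fun s _ ⟨hs, ho⟩ =>
        h (((he s).eq_of_inr ho).trans hs))
  rw [hS, sum_disjSum, sum_congr rfl hcopies, sum_congr rfl hdummies, sum_ite_eq', if_pos hq,
    slack] at hfiber
  omega

end Rounding

theorem exists_zero_one_of_fractional {r : γ → ℕ} {c : α → ℕ} {x : α → γ → ℝ}
    (hu : ∀ q K, u q K ≤ 1) (hx : ∀ p ∈ P, ∀ q ∈ Q, 0 ≤ x p q)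
    (hr : ∀ q ∈ Q, ∑ p ∈ P, x p q = r q) (hc : ∀ p ∈ P, ∑ q ∈ Q, x p q = c p)
    (hcap : ∀ q ∈ Q, ∀ p ∈ P, ∑ p' ∈ P with g p' = g p, x p' q ≤ u q (g p)) :
    ∃ ξ : α → γ → ℝ, (∀ p q, ξ p q = 0 ∨ ξ p q = 1) ∧
      (∀ q ∈ Q, ∑ p ∈ P, ξ p q = r q) ∧ (∀ p ∈ P, ∑ q ∈ Q, ξ p q = c p) ∧
      ∀ q K, ∑ p ∈ P with g p = K, ξ p q ≤ u q K := by
  have hfrac : IsFractional P Q g u r c x := ⟨hx, hr, hc, hcap⟩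
  obtain ⟨e, he⟩ := hfrac.exists_equiv_fills hu
  refine ⟨fun p q => matchCount e p q, fun p q => ?_, fun q hq => ?_, fun p hp => ?_,
    fun q K => ?_⟩ <;> dsimp only
  · rcases Nat.le_one_iff_eq_zero_or_eq_one.1 ((matchCount_le he p q).trans (hu q (g p)))
      with h | h <;> simp [h]
  · exact_mod_cast sum_matchCount_left he hq (hfrac.le_card_slots hu hq)
  · exact_mod_cast sum_matchCount_right (e := e) hp
  · exact_mod_cast sum_matchCount_block_le he q K

end BlockCapacity

section BlockCorner

/-- The corner `i ∈ kℕ₀ + 1` of the length-`k` block of indices containing `p ≥ 1`. -/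
def blockCorner (k p : ℕ) : ℕ := k * ((p - 1) / k) + 1

variable {k p i : ℕ}

theorem blockCorner_mod : blockCorner k p % k = 1 % k := Nat.mul_add_mod k _ 1

theorem one_le_blockCorner : 1 ≤ blockCorner k p := Nat.le_add_left 1 _

theorem blockCorner_le (hp : 1 ≤ p) : blockCorner k p ≤ p := by
  have := Nat.div_mul_le_self (p - 1) k
  rw [blockCorner, mul_comm]
  omega

theorem lt_blockCorner_add (hk : 0 < k) (hp : 1 ≤ p) : p < blockCorner k p + k := by
  have := Nat.div_add_mod (p - 1) k
  have := Nat.mod_lt (p - 1) hk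
  rw [blockCorner]
  omega

theorem blockCorner_eq_self (hi : 1 ≤ i) (hik : i % k = 1 % k) : blockCorner k i = i := by
  have := Nat.div_add_mod (i - 1) k
  have := Nat.sub_mod_eq_zero_of_mod_eq hik
  rw [blockCorner]
  omega

theorem blockCorner_eq_iff (hk : 0 < k) (hi : 1 ≤ i) (hik : i % k = 1 % k) (hp : 1 ≤ p) :
    blockCorner k p = i ↔ i ≤ p ∧ p < i + k := by
  refine ⟨fun h => h ▸ ⟨blockCorner_le hp, lt_blockCorner_add hk hp⟩, fun ⟨hip, hpi⟩ => ?_⟩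
  have hdvd : k ∣ i - 1 := Nat.dvd_of_mod_eq_zero (Nat.sub_mod_eq_zero_of_mod_eq hik)
  have hdiv : (p - 1) / k = (i - 1) / k := by
    rw [show p - 1 = i - 1 + (p - i) by omega, Nat.add_div_of_dvd_right hdvd,
      Nat.div_eq_of_lt (by omega : p - i < k), add_zero]
  rw [blockCorner, hdiv]
  exact blockCorner_eq_self hi hik

end BlockCorner

theorem mem_cornerPts {m n k i j : ℕ} :
    (i, j) ∈ cornerPts m n k ↔ i ∈ Icc 1 m ∧ j ∈ Icc 1 n ∧ i % k = 1 % k ∧ j % k = 1 % k := by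
  simp only [cornerPts, gridIcc, mem_filter, mem_product, and_assoc]

theorem boxW_eq (m : ℕ) {k i j l : ℕ} (hk : 0 < k) (hi : 1 ≤ i) (hik : i % k = 1 % k)
    (hl : l < k) : boxW m k i j l = {p ∈ Icc 1 m | blockCorner k p = i} ×ˢ {j + l} := by
  ext ⟨p, q⟩
  simp only [boxW, blockF, mem_filter, mem_product, mem_Icc, mem_singleton]
  constructor
  · rintro ⟨⟨⟨hip, hpi⟩, -⟩, hpm, rfl⟩
    exact ⟨⟨hpm, (blockCorner_eq_iff hk hi hik hpm.1).2 ⟨hip, by omega⟩⟩, rfl⟩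
  · rintro ⟨⟨hpm, hcorner⟩, rfl⟩
    have := (blockCorner_eq_iff hk hi hik hpm.1).1 hcorner
    exact ⟨⟨⟨this.1, by omega⟩, by omega, by omega⟩, hpm, rfl⟩

theorem sum_boxW {m k i j l : ℕ} (hk : 0 < k) (hi : 1 ≤ i) (hik : i % k = 1 % k) (hl : l < k)
    (F : ℕ × ℕ → ℝ) :
    ∑ z ∈ boxW m k i j l, F z = ∑ p ∈ Icc 1 m with blockCorner k p = i, F (p, j + l) := by
  rw [boxW_eq m hk hi hik hl, sum_product]
  simp only [sum_singleton]

-- The column `q` of the block of `p` is a box at the corner `(blockCorner k p, blockCorner k q)`.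
theorem sum_blockCorner_le_of_boxW {m n k : ℕ} (hk : 0 < k) {v : ℕ × ℕ → ℕ} {x : ℕ × ℕ → ℝ}
    (hxbox : ∀ w ∈ cornerPts m n k, ∀ l < k,
      ∑ z ∈ boxW m k w.1 w.2 l, x z ≤ (min 1 (v w) : ℕ))
    {p q : ℕ} (hp : p ∈ Icc 1 m) (hq : q ∈ Icc 1 n) :
    ∑ p' ∈ Icc 1 m with blockCorner k p' = blockCorner k p, x (p', q) ≤
      (min 1 (v (blockCorner k p, blockCorner k q)) : ℕ) := by
  obtain ⟨hp1, hpm⟩ := mem_Icc.1 hp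
  obtain ⟨hq1, hqn⟩ := mem_Icc.1 hq
  have hcorner : (blockCorner k p, blockCorner k q) ∈ cornerPts m n k :=
    mem_cornerPts.2 ⟨mem_Icc.2 ⟨one_le_blockCorner, (blockCorner_le hp1).trans hpm⟩,
      mem_Icc.2 ⟨one_le_blockCorner, (blockCorner_le hq1).trans hqn⟩,
      blockCorner_mod, blockCorner_mod⟩
  have hl : q - blockCorner k q < k := by have := lt_blockCorner_add hk hq1; omega
  have := hxbox _ hcorner _ hl
  rwa [sum_boxW hk one_le_blockCorner blockCorner_mod hl,
    Nat.add_sub_cancel' (blockCorner_le hq1)] at this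

theorem stmt13_general (k m n : ℕ) (hk : 2 ≤ k)
    (r c : ℕ → ℕ) (v : ℕ × ℕ → ℕ)
    (x : ℕ × ℕ → ℝ)
    (hx01 : ∀ p ∈ gridIcc m n, 0 ≤ x p ∧ x p ≤ 1)
    (hxrow : ∀ q ∈ Finset.Icc 1 n, ∑ p ∈ Finset.Icc 1 m, x (p, q) = (r q : ℝ))
    (hxcol : ∀ p ∈ Finset.Icc 1 m, ∑ q ∈ Finset.Icc 1 n, x (p, q) = (c p : ℝ))
    (hxbox : ∀ w ∈ cornerPts m n k, ∀ l < k,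
      ∑ z ∈ boxW m k w.1 w.2 l, x z ≤ (min 1 (v w) : ℕ)) :
    ∃ ξ : ℕ × ℕ → ℝ,
      (∀ p ∈ gridIcc m n, ξ p = 0 ∨ ξ p = 1) ∧
      (∀ q ∈ Finset.Icc 1 n, ∑ p ∈ Finset.Icc 1 m, ξ (p, q) = (r q : ℝ)) ∧
      (∀ p ∈ Finset.Icc 1 m, ∑ q ∈ Finset.Icc 1 n, ξ (p, q) = (c p : ℝ)) ∧
      (∀ w ∈ cornerPts m n k, ∀ l < k,
        ∑ z ∈ boxW m k w.1 w.2 l, ξ z ≤ (min 1 (v w) : ℕ)) := by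
  have hk0 : 0 < k := by omega
  obtain ⟨ξ, h01, hrow, hcol, hcap⟩ := BlockCapacity.exists_zero_one_of_fractional
    (g := blockCorner k) (u := fun q i => min 1 (v (i, blockCorner k q)))
    (fun _ _ => min_le_left _ _) (fun p hp q hq => (hx01 (p, q) (mem_product.2 ⟨hp, hq⟩)).1)
    hxrow hxcol fun q hq p hp => sum_blockCorner_le_of_boxW hk0 hxbox hp hq
  refine ⟨fun z => ξ z.1 z.2, fun _ _ => h01 _ _, hrow, hcol, ?_⟩
  rintro ⟨i, j⟩ hw l hl
  obtain ⟨hi, hj, hik, hjk⟩ := mem_cornerPts.1 hw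
  have hj1 := (mem_Icc.1 hj).1
  have hjl : blockCorner k (j + l) = j :=
    (blockCorner_eq_iff hk0 hj1 hjk (by omega)).2 ⟨by omega, by omega⟩
  rw [sum_boxW hk0 (mem_Icc.1 hi).1 hik hl]
  simpa [hjl] using hcap (j + l) i

/-- if the LP relaxation of the `Rec(k,ν,2)` system (row sums, column sums and the
box constraints `Σ_{W(i,j+l)} x ≤ min{1, v(i,j)}`) has a fractional solution with entries in
`[0,1]`, then it has a solution with entries in `{0,1}`. -/
theorem stmt13 (k ν m n : ℕ) (hk : 2 ≤ k) (hν : k ≤ ν)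
    (hm : k ∣ m) (hm0 : 0 < m) (hn : k ∣ n) (hn0 : 0 < n)
    (r c : ℕ → ℕ) (v : ℕ × ℕ → ℕ) (hv : ∀ w ∈ cornerPts m n k, v w = 0 ∨ v w = ν)
    (x : ℕ × ℕ → ℝ)
    (hx01 : ∀ p ∈ gridIcc m n, 0 ≤ x p ∧ x p ≤ 1)
    (hxrow : ∀ q ∈ Finset.Icc 1 n, ∑ p ∈ Finset.Icc 1 m, x (p, q) = (r q : ℝ))
    (hxcol : ∀ p ∈ Finset.Icc 1 m, ∑ q ∈ Finset.Icc 1 n, x (p, q) = (c p : ℝ))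
    (hxbox : ∀ w ∈ cornerPts m n k, ∀ l < k,
      ∑ z ∈ boxW m k w.1 w.2 l, x z ≤ (min 1 (v w) : ℕ)) :
    ∃ ξ : ℕ × ℕ → ℝ,
      (∀ p ∈ gridIcc m n, ξ p = 0 ∨ ξ p = 1) ∧
      (∀ q ∈ Finset.Icc 1 n, ∑ p ∈ Finset.Icc 1 m, ξ (p, q) = (r q : ℝ)) ∧
      (∀ p ∈ Finset.Icc 1 m, ∑ q ∈ Finset.Icc 1 n, ξ (p, q) = (c p : ℝ)) ∧
      (∀ w ∈ cornerPts m n k, ∀ l < k,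
        ∑ z ∈ boxW m k w.1 w.2 l, ξ z ≤ (min 1 (v w) : ℕ)) :=
  stmt13_general k m n hk r c v x hx01 hxrow hxcol hxbox
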